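/- arXiv:2106.06819 — 2 statements merged into one kernel-verified Lean document; each statement's English description precedes it below -/
import Mathlib

section
/- With p the standard Gaussian density on ℝ^d and q the 'ring' density constructed by doubling p on even annuli [r_{2k}, r_{2k+1}) and setting it to zero on odd annuli [r_{2k+1}, r_{2k+2}) (agreeing with p outside B(0, r_{2n})), where all 2n annuli have equal Gaussian mass m, the set S = ∪_{k=0}^{n−1} {z : r_{2k+1} ≤ ‖z‖ < r_{2k+2}} satisfies ∫_S p = nm and ∫_S q = 0; i.e., q has a (0, nm)-prior hole with respect to p. -/
open MeasureTheory Real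
open scoped Classical

/-- The density of the standard Gaussian `N(0, I_d)` on `ℝ^d`. -/
noncomputable def stdGaussianDensity (d : ℕ) (z : EuclideanSpace ℝ (Fin d)) : ℝ :=
  (2 * π) ^ (-(d : ℝ) / 2) * Real.exp (-‖z‖ ^ 2 / 2)

lemma stdGaussianDensity_continuous (d : ℕ) : Continuous (stdGaussianDensity d) := by
  unfold stdGaussianDensity
  fun_prop

/-- For the "ring" density `q` (doubled on even annuli, zero on odd annuli, equal to the
Gaussian density `p` outside the ball of radius `r (2n)`), the union `S` of the odd annuli
satisfies `∫_S p = n·m` and `∫_S q = 0`: a `(0, n·m)`-prior hole. -/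
theorem ring_density_prior_hole
    (d n : ℕ) (hd : 1 ≤ d) (hn : 1 ≤ n)
    (r : ℕ → ℝ) (hr0 : r 0 = 0) (hrmono : ∀ i, i < 2 * n → r i < r (i + 1))
    (m : ℝ) (hm : 0 < m)
    (hmass : ∀ i, 1 ≤ i → i ≤ 2 * n →
      ∫ z in {z : EuclideanSpace ℝ (Fin d) | r (i - 1) ≤ ‖z‖ ∧ ‖z‖ < r i},
        stdGaussianDensity d z = m)
    (q : EuclideanSpace ℝ (Fin d) → ℝ)
    (hq : ∀ z, q z =
      if ∃ k, k < n ∧ r (2 * k) ≤ ‖z‖ ∧ ‖z‖ < r (2 * k + 1) then 2 * stdGaussianDensity d z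
      else if ‖z‖ < r (2 * n) then 0 else stdGaussianDensity d z)
    (S : Set (EuclideanSpace ℝ (Fin d)))
    (hS : S = ⋃ k ∈ Finset.range n,
      {z : EuclideanSpace ℝ (Fin d) | r (2 * k + 1) ≤ ‖z‖ ∧ ‖z‖ < r (2 * k + 2)}) :
    (∫ z in S, stdGaussianDensity d z = n * m) ∧ (∫ z in S, q z = 0) := by
  -- monotonicity of r on [0, 2n]
  have hmono : ∀ i j, i ≤ j → j ≤ 2 * n → r i ≤ r j := by
    intro i j hij hj
    induction j with
    | zero => simp_all
    | succ j ih =>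
      rcases Nat.eq_or_lt_of_le hij with h | h
      · subst h; exact le_refl _
      · exact le_trans (ih (Nat.lt_succ_iff.mp h) (by omega))
          (le_of_lt (hrmono j (by omega)))
  -- the annuli
  set A : ℕ → Set (EuclideanSpace ℝ (Fin d)) :=
    fun k => {z | r (2 * k + 1) ≤ ‖z‖ ∧ ‖z‖ < r (2 * k + 2)} with hA
  have hAmeas : ∀ k, MeasurableSet (A k) := by
    intro k
    have : A k = (fun z : EuclideanSpace ℝ (Fin d) => ‖z‖) ⁻¹'
        (Set.Ico (r (2 * k + 1)) (r (2 * k + 2))) := rfl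
    rw [this]
    exact measurable_norm measurableSet_Ico
  have hAint : ∀ k, IntegrableOn (stdGaussianDensity d) (A k) := by
    intro k
    have h1 : IntegrableOn (stdGaussianDensity d)
        (Metric.closedBall (0 : EuclideanSpace ℝ (Fin d)) (r (2 * k + 2))) :=
      ((stdGaussianDensity_continuous d).continuousOn).integrableOn_compact
        (isCompact_closedBall _ _)
    refine h1.mono_set ?_
    intro z hz
    simp only [Metric.mem_closedBall, dist_zero_right]
    exact le_of_lt hz.2
  have key : ∀ i j, i < j → j < n → Disjoint (A i) (A j) := by
    intro i j h hj
    apply Set.disjoint_left.mpr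
    intro z hzi hzj
    have h1 : r (2 * i + 2) ≤ r (2 * j + 1) :=
      hmono _ _ (by omega) (by omega)
    have := lt_of_lt_of_le hzi.2 h1
    exact absurd hzj.1 (not_le.mpr this)
  have hdisj : Set.Pairwise (↑(Finset.range n)) (Function.onFun Disjoint A) := by
    intro i hi j hj hij
    simp only [Finset.coe_range, Set.mem_Iio] at hi hj
    rcases hij.lt_or_gt with h | h
    · exact key i j h hj
    · exact (key j i h hi).symm
  constructor
  · rw [hS, integral_biUnion_finset (Finset.range n) (fun k _ => hAmeas k) hdisj
      (fun k _ => hAint k)]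
    have : ∀ k ∈ Finset.range n, ∫ z in A k, stdGaussianDensity d z = m := by
      intro k hk
      simp only [Finset.mem_range] at hk
      have := hmass (2 * k + 2) (by omega) (by omega)
      simpa using this
    rw [Finset.sum_congr rfl this]
    simp [mul_comm]
  · apply setIntegral_eq_zero_of_forall_eq_zero
    intro z hz
    rw [hS] at hz
    simp only [Set.mem_iUnion, Finset.mem_range] at hz
    obtain ⟨k, hk, hz1, hz2⟩ := hz
    rw [hq z]
    rw [if_neg, if_pos]
    · exact lt_of_lt_of_le hz2 (hmono _ _ (by omega) (by omega))
    · rintro ⟨j, hj, hj1, hj2⟩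
      rcases le_or_gt j k with h | h
      · have : r (2 * j + 1) ≤ r (2 * k + 1) := hmono _ _ (by omega) (by omega)
        exact absurd hz1 (not_le.mpr (lt_of_lt_of_le hj2 this))
      · have : r (2 * k + 2) ≤ r (2 * j) := hmono _ _ (by omega) (by omega)
        exact absurd hj1 (not_le.mpr (lt_of_lt_of_le hz2 this))
end

section
/- For every ε > 0 and every δ < 1/2 and every γ > 0, there exists a probability distribution q on ℝ such that q has an (ε, δ)-prior hole with respect to the standard Gaussian p = N(0,1), D_KL(q ‖ p) ≤ log 2, and the 2-Wasserstein distance W_2(q, p) < γ. -/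
open MeasureTheory ProbabilityTheory Set
open scoped ENNReal Classical

lemma gauss_pdf_shift (h : ℝ) (y : ℝ) :
    ENNReal.ofReal (Real.exp (y * h - h ^ 2 / 2)) * gaussianPDF 0 1 y
      = gaussianPDF 0 1 (y - h) := by
  simp only [gaussianPDF, gaussianPDFReal]
  rw [← ENNReal.ofReal_mul (Real.exp_nonneg _)]
  congr 1
  rw [← mul_assoc, mul_comm (Real.exp _) _, mul_assoc, ← Real.exp_add]
  congr 2
  push_cast
  ring

lemma map_comb_eq_withDensity (h : ℝ) (hh : 0 < h) (S : Set ℝ) (hSm : MeasurableSet S)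
    (hdisj : ∀ x ∈ S, x + h ∉ S) :
    (gaussianReal 0 1).map (fun x => if x ∈ S then x + h else x)
      = (gaussianReal 0 1).withDensity
        (fun y => if y ∈ S then 0 else if y - h ∈ S then
          1 + ENNReal.ofReal (Real.exp (y * h - h ^ 2 / 2)) else 1) := by
  classical
  set φ := gaussianPDF 0 1 with hφdef
  have hφm : Measurable φ := measurable_gaussianPDF 0 1
  set r : ℝ → ℝ := fun x => if x ∈ S then x + h else x with hrdef
  set f : ℝ → ℝ≥0∞ := fun y => if y ∈ S then 0 else if y - h ∈ S then
      1 + ENNReal.ofReal (Real.exp (y * h - h ^ 2 / 2)) else 1 with hfdef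
  have hr : Measurable r := Measurable.ite hSm (measurable_id.add_const h) measurable_id
  have hQm : MeasurableSet {y : ℝ | y - h ∈ S} :=
    (measurable_id.sub_const h) hSm
  have hf : Measurable f := by
    refine Measurable.ite hSm measurable_const (Measurable.ite hQm ?_ measurable_const)
    exact Measurable.const_add (((measurable_id.mul_const h).sub_const _).exp.ennreal_ofReal) 1
  have hQS : ∀ y : ℝ, y - h ∈ S → y ∉ S := by
    intro y hy hyS
    exact hdisj (y - h) hy (by simpa using hyS)
  have hp : gaussianReal 0 1 = volume.withDensity φ := gaussianReal_of_var_ne_zero 0 one_ne_zero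
  refine Measure.ext fun A hA => ?_
  rw [Measure.map_apply hr hA, hp, withDensity_apply _ (hr hA), withDensity_apply _ hA,
    restrict_withDensity hA, lintegral_withDensity_eq_lintegral_mul _ hφm hf]
  have hfun : ∀ y : ℝ, (φ * f) y = Sᶜ.indicator φ y
      + ({y : ℝ | y - h ∈ S}).indicator (fun y => φ (y - h)) y := by
    intro y
    by_cases hyS : y ∈ S
    · have hyQ : y ∉ {y : ℝ | y - h ∈ S} := fun hq => hQS y hq hyS
      simp [f, hyS, Set.indicator, hyQ]
    · by_cases hyQ : y - h ∈ S
      · simp only [Pi.mul_apply, hfdef, if_neg hyS, if_pos hyQ,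
          Set.indicator_of_mem (show y ∈ Sᶜ from hyS),
          Set.indicator_of_mem (show y ∈ {y : ℝ | y - h ∈ S} from hyQ)]
        rw [mul_add, mul_one, mul_comm, gauss_pdf_shift]
      · simp [f, hyS, hyQ, Set.indicator]
  have hpre : r ⁻¹' A = ((fun x => x + h) ⁻¹' A ∩ S) ∪ (A ∩ Sᶜ) := by
    ext x
    simp only [Set.mem_preimage, hrdef, Set.mem_union, Set.mem_inter_iff, Set.mem_compl_iff]
    by_cases hx : x ∈ S <;> simp [hx]
  rw [hpre, lintegral_union (hA.inter hSm.compl)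
    (Disjoint.mono Set.inter_subset_right Set.inter_subset_right disjoint_compl_right)]
  have hAh : MeasurableSet ((fun x : ℝ => x + h) ⁻¹' A) := hA.preimage (measurable_add_const h)
  have htrans : ∫⁻ x in ((fun x : ℝ => x + h) ⁻¹' A ∩ S), φ x
      = ∫⁻ y, (A ∩ {y : ℝ | y - h ∈ S}).indicator (fun y => φ (y - h)) y := by
    rw [← lintegral_indicator (hAh.inter hSm)]
    rw [← lintegral_add_right_eq_self
      (fun y => (A ∩ {y : ℝ | y - h ∈ S}).indicator (fun y => φ (y - h)) y) h]
    congr 1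
    funext x
    by_cases hx : x ∈ S <;> by_cases hxA : x + h ∈ A <;>
      simp [Set.indicator, hx, hxA]
  have hterm2 : ∫⁻ x in A ∩ Sᶜ, φ x = ∫⁻ y, (A ∩ Sᶜ).indicator φ y :=
    (lintegral_indicator (hA.inter hSm.compl) φ).symm
  have hRHS : ∫⁻ y in A, (φ * f) y
      = (∫⁻ y, (A ∩ {y : ℝ | y - h ∈ S}).indicator (fun y => φ (y - h)) y)
        + ∫⁻ y, (A ∩ Sᶜ).indicator φ y := by
    rw [← lintegral_indicator hA]
    have hpt : ∀ y, A.indicator (φ * f) y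
        = (A ∩ {y : ℝ | y - h ∈ S}).indicator (fun y => φ (y - h)) y
          + (A ∩ Sᶜ).indicator φ y := by
      intro y
      by_cases hyA : y ∈ A
      · rw [Set.indicator_of_mem hyA, hfun y]
        by_cases h2 : y - h ∈ S <;> by_cases h3 : y ∈ S <;>
          simp [Set.indicator, hyA, h2, h3, add_comm]
      · simp [Set.indicator, hyA]
    rw [lintegral_congr hpt]
    have hmeas1 : Measurable ((A ∩ {y : ℝ | y - h ∈ S}).indicator (fun y => φ (y - h))) :=
      ((by fun_prop : Measurable fun y : ℝ => φ (y - h))).indicator (hA.inter hQm)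
    rw [lintegral_add_left hmeas1]
  rw [htrans, hterm2, hRHS]

lemma core_construction (h M : ℝ) (hh : 0 < h) (S : Set ℝ) (hSm : MeasurableSet S)
    (hdisj : ∀ x ∈ S, x + h ∉ S) (hub : ∀ x ∈ S, x + h < M) :
    ∃ q : Measure ℝ, IsProbabilityMeasure q ∧ q S = 0 ∧ q ≪ gaussianReal 0 1 ∧
      (∫ x, llr q (gaussianReal 0 1) x ∂q
        ≤ Real.log (1 + Real.exp (M * h)) * (1 - ((gaussianReal 0 1) (Set.Ioi M)).toReal)) ∧
      ∃ π : Measure (ℝ × ℝ), IsProbabilityMeasure π ∧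
        π.map Prod.fst = q ∧ π.map Prod.snd = gaussianReal 0 1 ∧
        ∫ z, |z.1 - z.2| ^ 2 ∂π ≤ h ^ 2 := by
  classical
  set p : Measure ℝ := gaussianReal 0 1 with hpdef
  set r : ℝ → ℝ := fun x => if x ∈ S then x + h else x with hrdef
  set f : ℝ → ℝ≥0∞ := fun y => if y ∈ S then 0 else if y - h ∈ S then
      1 + ENNReal.ofReal (Real.exp (y * h - h ^ 2 / 2)) else 1 with hfdef
  have hr : Measurable r := Measurable.ite hSm (measurable_id.add_const h) measurable_id
  have hQm : MeasurableSet {y : ℝ | y - h ∈ S} := (measurable_id.sub_const h) hSm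
  have hf : Measurable f := by
    refine Measurable.ite hSm measurable_const (Measurable.ite hQm ?_ measurable_const)
    exact Measurable.const_add (((measurable_id.mul_const h).sub_const _).exp.ennreal_ofReal) 1
  have hQS : ∀ y : ℝ, y - h ∈ S → y ∉ S := by
    intro y hy hyS
    exact hdisj (y - h) hy (by simpa using hyS)
  set q : Measure ℝ := p.map r with hqdef
  have hmap : q = p.withDensity f := map_comb_eq_withDensity h hh S hSm hdisj
  have hq_prob : IsProbabilityMeasure q := Measure.isProbabilityMeasure_map hr.aemeasurable
  refine ⟨q, hq_prob, ?_, ?_, ?_, ?_⟩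
  · -- q S = 0
    have hemp : r ⁻¹' S = ∅ := by
      ext x
      simp only [Set.mem_preimage, hrdef, Set.mem_empty_iff_false, iff_false]
      by_cases hx : x ∈ S
      · simpa [hx] using hdisj x hx
      · simp [hx]
    rw [hqdef, Measure.map_apply hr hSm, hemp, measure_empty]
  · rw [hmap]; exact withDensity_absolutelyContinuous p f
  · -- KL bound
    have hac : q ≪ p := by rw [hmap]; exact withDensity_absolutelyContinuous p f
    have hrn : q.rnDeriv p =ᵐ[p] f := by
      rw [hmap]; exact Measure.rnDeriv_withDensity p hf
    have hrnq : ∀ᵐ x ∂q, q.rnDeriv p x = f x := hac.ae_le hrn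
    set g : ℝ → ℝ := fun x => Real.log ((f x).toReal) with hgdef
    have hllr : (fun x => llr q p x) =ᵐ[q] g := by
      filter_upwards [hrnq] with x hx
      unfold llr
      rw [hx]
    set c : ℝ := Real.log (1 + Real.exp (M * h)) with hcdef
    have hc0 : 0 ≤ c := Real.log_nonneg (by nlinarith [Real.exp_pos (M * h)])
    have hfQ : ∀ x : ℝ, x - h ∈ S →
        (f x).toReal = 1 + Real.exp (x * h - h ^ 2 / 2) := by
      intro x hxQ
      have hxS : x ∉ S := hQS x hxQ
      simp only [hfdef, if_neg hxS, if_pos hxQ]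
      rw [ENNReal.toReal_add ENNReal.one_ne_top ENNReal.ofReal_ne_top, ENNReal.toReal_one,
        ENNReal.toReal_ofReal (Real.exp_nonneg _)]
    have hgle : ∀ x, g x ≤ ({y : ℝ | y - h ∈ S}).indicator (fun _ => c) x := by
      intro x
      by_cases hxQ : x - h ∈ S
      · rw [Set.indicator_of_mem (show x ∈ {y : ℝ | y - h ∈ S} from hxQ)]
        rw [hgdef]
        simp only
        rw [hfQ x hxQ]
        apply Real.log_le_log (by positivity)
        have hxM : x < M := by have := hub (x - h) hxQ; linarith
        have h1 : x * h - h ^ 2 / 2 ≤ M * h := by nlinarith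
        have := Real.exp_le_exp.mpr h1
        linarith
      · rw [Set.indicator_of_notMem (show x ∉ {y : ℝ | y - h ∈ S} from hxQ)]
        by_cases hxS : x ∈ S
        · simp [hgdef, hfdef, hxS]
        · simp [hgdef, hfdef, hxS, hxQ]
    have hg0 : ∀ x, 0 ≤ g x := by
      intro x
      by_cases hxQ : x - h ∈ S
      · rw [hgdef]; simp only; rw [hfQ x hxQ]
        exact Real.log_nonneg (by nlinarith [Real.exp_pos (x * h - h ^ 2 / 2)])
      · by_cases hxS : x ∈ S
        · simp [hgdef, hfdef, hxS]
        · simp [hgdef, hfdef, hxS, hxQ]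
    have hgmeas : Measurable g := Real.measurable_log.comp (ENNReal.measurable_toReal.comp hf)
    have hint_g : Integrable g q := by
      refine Integrable.mono' (integrable_const c) hgmeas.aestronglyMeasurable ?_
      filter_upwards with x
      rw [Real.norm_eq_abs, abs_of_nonneg (hg0 x)]
      refine (hgle x).trans ?_
      by_cases hxQ : x ∈ {y : ℝ | y - h ∈ S} <;> simp [Set.indicator, hxQ, hc0]
    have hint_ind : Integrable (({y : ℝ | y - h ∈ S}).indicator (fun _ => c)) q :=
      (integrable_const c).indicator hQm
    calc ∫ x, llr q p x ∂q = ∫ x, g x ∂q := integral_congr_ae hllr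
      _ ≤ ∫ x, ({y : ℝ | y - h ∈ S}).indicator (fun _ => c) x ∂q :=
          integral_mono hint_g hint_ind hgle
      _ = (q {y : ℝ | y - h ∈ S}).toReal • c := integral_indicator_const c hQm
      _ ≤ (1 - (p (Set.Ioi M)).toReal) * c := by
          rw [smul_eq_mul]
          refine mul_le_mul_of_nonneg_right ?_ hc0
          have hQsub : {y : ℝ | y - h ∈ S} ⊆ (Set.Ioi M)ᶜ := by
            intro y hy
            simp only [Set.mem_compl_iff, Set.mem_Ioi, not_lt]
            have := hub (y - h) hy
            linarith
          have h1 : q {y : ℝ | y - h ∈ S} ≤ q (Set.Ioi M)ᶜ := measure_mono hQsub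
          have h2 : q (Set.Ioi M)ᶜ = 1 - q (Set.Ioi M) := prob_compl_eq_one_sub measurableSet_Ioi
          have h3 : p (Set.Ioi M) ≤ q (Set.Ioi M) := by
            rw [hqdef, Measure.map_apply hr measurableSet_Ioi]
            refine measure_mono fun x hx => ?_
            have hxS : x ∉ S := by
              intro hxS
              have := hub x hxS
              simp only [Set.mem_Ioi] at hx
              linarith
            simpa [Set.mem_preimage, hrdef, hxS] using hx
          have h4 : q {y : ℝ | y - h ∈ S} ≤ 1 - p (Set.Ioi M) := by
            refine (h1.trans h2.le).trans ?_
            exact tsub_le_tsub_left h3 1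
          have hne : (1 : ℝ≥0∞) - p (Set.Ioi M) ≠ ⊤ :=
            ne_top_of_le_ne_top ENNReal.one_ne_top tsub_le_self
          have h5 : (q {y : ℝ | y - h ∈ S}).toReal ≤ (1 - p (Set.Ioi M)).toReal :=
            ENNReal.toReal_mono hne h4
          have h6 : ((1 : ℝ≥0∞) - p (Set.Ioi M)).toReal = 1 - (p (Set.Ioi M)).toReal := by
            rw [ENNReal.toReal_sub_of_le prob_le_one ENNReal.one_ne_top, ENNReal.toReal_one]
          rw [← h6]
          exact h5
      _ = Real.log (1 + Real.exp (M * h)) * (1 - (p (Set.Ioi M)).toReal) := by ring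
  · -- coupling
    have hg2 : Measurable (fun y : ℝ => (r y, y)) := hr.prodMk measurable_id
    refine ⟨p.map (fun y : ℝ => (r y, y)), Measure.isProbabilityMeasure_map hg2.aemeasurable, ?_, ?_, ?_⟩
    · rw [Measure.map_map measurable_fst hg2]
      rfl
    · rw [Measure.map_map measurable_snd hg2]
      have : (Prod.snd ∘ fun y : ℝ => (r y, y)) = id := rfl
      rw [this, Measure.map_id]
    · rw [integral_map hg2.aemeasurable
        (by fun_prop : Continuous fun z : ℝ × ℝ => |z.1 - z.2| ^ 2).aestronglyMeasurable]
      have hpt : ∀ y : ℝ, |(r y, y).1 - (r y, y).2| ^ 2 = S.indicator (fun _ => h ^ 2) y := by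
        intro y
        by_cases hy : y ∈ S
        · simp only [hrdef, if_pos hy, Set.indicator_of_mem hy]
          rw [add_sub_cancel_left, abs_of_pos hh]
        · simp [hrdef, if_neg hy, Set.indicator_of_notMem hy]
      rw [integral_congr_ae (Filter.Eventually.of_forall hpt), integral_indicator_const _ hSm,
        smul_eq_mul]
      have h1 : (p S).toReal ≤ 1 := by
        have := prob_le_one (μ := p) (s := S)
        simpa using ENNReal.toReal_mono ENNReal.one_ne_top this
      change (p S).toReal * h ^ 2 ≤ h ^ 2
      nlinarith [ENNReal.toReal_nonneg (a := p S), sq_nonneg h]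

lemma slice_shift_disj (h a : ℝ) (hh : 0 < h) (N : ℕ) :
    ∀ x ∈ ⋃ k ∈ Finset.range N, Ico (a + 2*(k:ℝ)*h) (a + (2*(k:ℝ)+1)*h),
      x + h ∉ ⋃ k ∈ Finset.range N, Ico (a + 2*(k:ℝ)*h) (a + (2*(k:ℝ)+1)*h) := by
  intro x hx hx'
  simp only [Set.mem_iUnion, Set.mem_Ico, Finset.mem_range, exists_prop] at hx hx'
  obtain ⟨k, hkN, hk1, hk2⟩ := hx
  obtain ⟨k', hk'N, hk1', hk2'⟩ := hx'
  have hc1 : (k:ℝ) < (k':ℝ) := by nlinarith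
  have hc2 : (k':ℝ) < (k:ℝ) + 1 := by nlinarith
  have hn1 : k < k' := by exact_mod_cast hc1
  have hn2 : (k':ℝ) < ((k+1 : ℕ) : ℝ) := by push_cast; linarith
  have hn2' : k' < k + 1 := by exact_mod_cast hn2
  omega

lemma slice_cover (h b : ℝ) (hh : 0 < h) (N : ℕ) :
    Ico b (b + 2*(N:ℝ)*h) ⊆
      (⋃ k ∈ Finset.range N, Ico (b + 2*(k:ℝ)*h) (b + (2*(k:ℝ)+1)*h))
      ∪ (⋃ k ∈ Finset.range N, Ico ((b+h) + 2*(k:ℝ)*h) ((b+h) + (2*(k:ℝ)+1)*h)) := by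
  intro x hx
  obtain ⟨hxl, hxr⟩ := hx
  set j : ℤ := ⌊(x - b) / h⌋ with hjdef
  have hj0 : 0 ≤ j := Int.floor_nonneg.mpr (div_nonneg (by linarith) hh.le)
  have hjlt : j < 2 * N := by
    refine Int.floor_lt.mpr ?_
    rw [div_lt_iff₀ hh]
    push_cast
    nlinarith
  set jn : ℕ := j.toNat with hjndef
  have hjn : (jn : ℤ) = j := Int.toNat_of_nonneg hj0
  have hjnR : ((jn : ℝ)) = ((j : ℝ)) := by exact_mod_cast congrArg (Int.cast : ℤ → ℝ) hjn
  have hfl : ((j : ℝ)) ≤ (x - b) / h := Int.floor_le _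
  have hfu : (x - b) / h < (j : ℝ) + 1 := Int.lt_floor_add_one _
  have hxlb : b + (jn : ℝ) * h ≤ x := by
    have := (le_div_iff₀ hh).mp (hjnR ▸ hfl)
    linarith
  have hxub : x < b + ((jn : ℝ) + 1) * h := by
    have := (div_lt_iff₀ hh).mp (hjnR ▸ hfu)
    linarith
  have hjn2N : jn < 2 * N := by omega
  rcases Nat.even_or_odd jn with ⟨k, hk⟩ | ⟨k, hk⟩
  · left
    simp only [Set.mem_iUnion, Set.mem_Ico, Finset.mem_range, exists_prop]
    have hje : ((jn : ℝ)) = 2 * (k:ℝ) := by rw [hk]; push_cast; ring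
    rw [hje] at hxlb hxub
    exact ⟨k, by omega, by linarith, by linarith⟩
  · right
    simp only [Set.mem_iUnion, Set.mem_Ico, Finset.mem_range, exists_prop]
    have hje : ((jn : ℝ)) = 2 * (k:ℝ) + 1 := by rw [hk]; push_cast; ring
    rw [hje] at hxlb hxub
    exact ⟨k, by omega, by linarith, by linarith⟩

set_option maxHeartbeats 1000000 in
/-- For every `ε > 0`, `δ < 1/2` and `γ > 0`, there is a probability distribution `q` on `ℝ`
which has an `(ε, δ)`-prior hole with respect to the standard Gaussian `p = N(0,1)`, has
`D_KL(q ‖ p) ≤ log 2`, and has 2-Wasserstein distance to `p` smaller than `γ` (witnessed by a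
coupling whose quadratic cost is below `γ²`). -/
theorem exists_prior_hole_small_kl_small_w2
    (ε δ γ : ℝ) (hε : 0 < ε) (hδ0 : 0 < δ) (hδ : δ < 1 / 2) (hγ : 0 < γ) :
    ∃ q : Measure ℝ, IsProbabilityMeasure q ∧
      (∃ S : Set ℝ, MeasurableSet S ∧
        δ ≤ ((gaussianReal 0 1) S).toReal ∧ (q S).toReal ≤ ε) ∧
      (q ≪ gaussianReal 0 1 ∧ ∫ x, llr q (gaussianReal 0 1) x ∂q ≤ Real.log 2) ∧
      (∃ π : Measure (ℝ × ℝ), IsProbabilityMeasure π ∧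
        π.map Prod.fst = q ∧ π.map Prod.snd = gaussianReal 0 1 ∧
        ∫ p, |p.1 - p.2| ^ 2 ∂π < γ ^ 2) := by
  classical
  set p : Measure ℝ := gaussianReal 0 1 with hpdef
  -- choose window size L
  have hmono : Monotone (fun n : ℕ => Set.Ico (-(n:ℝ)) (n:ℝ)) := by
    intro m n hmn
    have hc : (m:ℝ) ≤ (n:ℝ) := by exact_mod_cast hmn
    exact Set.Ico_subset_Ico (by linarith) hc
  have hunion : (⋃ n : ℕ, Set.Ico (-(n:ℝ)) (n:ℝ)) = Set.univ := by
    ext x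
    simp only [Set.mem_iUnion, Set.mem_Ico, Set.mem_univ, iff_true]
    obtain ⟨n, hn⟩ := exists_nat_gt |x|
    obtain ⟨h1, h2⟩ := abs_lt.mp hn
    exact ⟨n, by linarith, by linarith⟩
  have htend := tendsto_measure_iUnion_atTop (μ := p) hmono
  rw [hunion] at htend
  have hlt : ENNReal.ofReal (2*δ) < p Set.univ := by
    rw [measure_univ]
    exact ENNReal.ofReal_lt_one.mpr (by linarith)
  obtain ⟨n, hn1, hn2⟩ := ((htend.eventually_const_lt hlt).and (Filter.eventually_ge_atTop 1)).exists
  set L : ℝ := (n : ℝ) with hLdef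
  have hL1 : 1 ≤ L := by rw [hLdef]; exact_mod_cast hn2
  have hL0 : 0 < L := by linarith
  have hwin : 2*δ ≤ (p (Set.Ico (-L) L)).toReal := by
    have := ENNReal.toReal_mono (measure_ne_top _ _) hn1.le
    rwa [ENNReal.toReal_ofReal (by linarith)] at this
  -- tail mass
  set θ : ℝ := (p (Set.Ioi (L+2))).toReal with hθdef
  have hθpos : 0 < θ := by
    have hne : p (Set.Ioi (L+2)) ≠ 0 := by
      intro h0
      have h0' := gaussianReal_absolutelyContinuous' 0 one_ne_zero h0
      rw [Real.volume_Ioi] at h0'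
      exact ENNReal.top_ne_zero h0'
    exact ENNReal.toReal_pos hne (measure_ne_top _ _)
  have hθ1 : θ ≤ 1 := by
    have := ENNReal.toReal_mono ENNReal.one_ne_top (prob_le_one (μ := p) (s := Set.Ioi (L+2)))
    simpa using this
  -- choose N and h
  have hlog2 : 0 < Real.log 2 := Real.log_pos one_lt_two
  obtain ⟨N, hN⟩ := exists_nat_gt (max (max L (L/γ)) ((L+2)*L/(θ*Real.log 2)))
  have hN1 : L < (N:ℝ) := lt_of_le_of_lt ((le_max_left L (L/γ)).trans (le_max_left _ _)) hN
  have hN2 : L/γ < (N:ℝ) := lt_of_le_of_lt ((le_max_right L (L/γ)).trans (le_max_left _ _)) hN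
  have hN3 : (L+2)*L/(θ*Real.log 2) < (N:ℝ) := lt_of_le_of_lt (le_max_right _ _) hN
  have hN0 : 0 < (N:ℝ) := lt_trans hL0 hN1
  set h : ℝ := L / N with hhdef
  have hh0 : 0 < h := div_pos hL0 hN0
  have hh1 : h ≤ 1 := by rw [hhdef, div_le_one hN0]; linarith
  have hhγ : h < γ := by
    rw [hhdef, div_lt_iff₀ hN0]
    have := (div_lt_iff₀ hγ).mp hN2
    nlinarith
  have hhθ : (L+2)*h ≤ θ * Real.log 2 := by
    have hpos : 0 < θ * Real.log 2 := mul_pos hθpos hlog2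
    have h3 := (div_lt_iff₀ hpos).mp hN3
    have h2 : (L+2) * h = (L+2)*L / N := by rw [hhdef]; ring
    rw [h2, div_le_iff₀ hN0]
    nlinarith
  have hNh : (N:ℝ) * h = L := by
    rw [hhdef]
    field_simp
  -- slice families
  set Se : Set ℝ := ⋃ k ∈ Finset.range N, Set.Ico ((-L) + 2*(k:ℝ)*h) ((-L) + (2*(k:ℝ)+1)*h) with hSedef
  set So : Set ℝ := ⋃ k ∈ Finset.range N, Set.Ico (((-L)+h) + 2*(k:ℝ)*h) (((-L)+h) + (2*(k:ℝ)+1)*h) with hSodef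
  have hSem : MeasurableSet Se := (Finset.range N).measurableSet_biUnion fun k _ => measurableSet_Ico
  have hSom : MeasurableSet So := (Finset.range N).measurableSet_biUnion fun k _ => measurableSet_Ico
  have hcov : Set.Ico (-L) L ⊆ Se ∪ So := by
    have hend : (-L) + 2*(N:ℝ)*h = L := by nlinarith [hNh]
    have := slice_cover h (-L) hh0 N
    rw [hend] at this
    exact this
  have hsum : 2*δ ≤ (p Se).toReal + (p So).toReal := by
    have h1 : p (Set.Ico (-L) L) ≤ p Se + p So := (measure_mono hcov).trans (measure_union_le _ _)
    have hfin : p Se + p So ≠ ⊤ := ENNReal.add_ne_top.mpr ⟨measure_ne_top _ _, measure_ne_top _ _⟩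
    have h2 := ENNReal.toReal_mono hfin h1
    rw [ENNReal.toReal_add (measure_ne_top _ _) (measure_ne_top _ _)] at h2
    linarith
  -- generic upper bound on slices
  have hub_gen : ∀ a : ℝ, a ≤ -L + h →
      ∀ x ∈ ⋃ k ∈ Finset.range N, Set.Ico (a + 2*(k:ℝ)*h) (a + (2*(k:ℝ)+1)*h),
        x + h < L + 2 := by
    intro a ha x hx
    simp only [Set.mem_iUnion, Set.mem_Ico, Finset.mem_range, exists_prop] at hx
    obtain ⟨k, hkN, hk1, hk2⟩ := hx
    have hkR : (k:ℝ) + 1 ≤ (N:ℝ) := by exact_mod_cast hkN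
    have hmul : (2*(k:ℝ)+1)*h ≤ (2*(N:ℝ)-1)*h :=
      mul_le_mul_of_nonneg_right (by linarith) hh0.le
    have hx2 : x < a + (2*(N:ℝ)-1)*h := by linarith
    have hL' : x < L := by linarith [hNh]
    linarith
  -- the key continuation
  have key : ∀ S : Set ℝ, MeasurableSet S → (∀ x ∈ S, x + h ∉ S) →
      (∀ x ∈ S, x + h < L + 2) → δ ≤ (p S).toReal →
      ∃ q : Measure ℝ, IsProbabilityMeasure q ∧
      (∃ S : Set ℝ, MeasurableSet S ∧
        δ ≤ ((gaussianReal 0 1) S).toReal ∧ (q S).toReal ≤ ε) ∧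
      (q ≪ gaussianReal 0 1 ∧ ∫ x, llr q (gaussianReal 0 1) x ∂q ≤ Real.log 2) ∧
      (∃ π : Measure (ℝ × ℝ), IsProbabilityMeasure π ∧
        π.map Prod.fst = q ∧ π.map Prod.snd = gaussianReal 0 1 ∧
        ∫ z, |z.1 - z.2| ^ 2 ∂π < γ ^ 2) := by
    intro S hSm hdisj hub hδS
    obtain ⟨q, hq_prob, hqS, hac, hKL, Pi, hPi_prob, hPi1, hPi2, hcost⟩ :=
      core_construction h (L+2) hh0 S hSm hdisj hub
    refine ⟨q, hq_prob, ⟨S, hSm, hδS, by rw [hqS]; simpa using hε.le⟩, ⟨hac, ?_⟩,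
      ⟨Pi, hPi_prob, hPi1, hPi2, lt_of_le_of_lt hcost (pow_lt_pow_left₀ hhγ hh0.le two_ne_zero)⟩⟩
    -- KL bound
    refine hKL.trans ?_
    set t : ℝ := (L+2)*h with htdef
    have ht0 : 0 ≤ t := mul_nonneg (by linarith) hh0.le
    have hlogle : Real.log (1 + Real.exp t) ≤ Real.log 2 + t := by
      have h1 : (1:ℝ) ≤ Real.exp t := Real.one_le_exp ht0
      have h2 : 1 + Real.exp t ≤ 2 * Real.exp t := by linarith
      calc Real.log (1 + Real.exp t) ≤ Real.log (2 * Real.exp t) :=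
            Real.log_le_log (by positivity) h2
        _ = Real.log 2 + t := by
            rw [Real.log_mul two_ne_zero (Real.exp_ne_zero _), Real.log_exp]
    have step : Real.log (1 + Real.exp t) * (1 - θ) ≤ (Real.log 2 + t) * (1 - θ) :=
      mul_le_mul_of_nonneg_right hlogle (by linarith)
    refine step.trans ?_
    nlinarith [mul_nonneg ht0 hθpos.le]
  -- choose the slice family with mass ≥ δ
  rcases le_or_gt δ ((p Se).toReal) with hcase | hcase
  · exact key Se hSem (slice_shift_disj h (-L) hh0 N) (hub_gen (-L) (by linarith) ) hcase
  · refine key So hSom (slice_shift_disj h ((-L)+h) hh0 N) (hub_gen ((-L)+h) (by linarith)) ?_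
    linarith
end
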